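/- Let n ≥ 2 and 1 ≤ k ≤ n−1 be integers, and let ω = (n+1)·ω_{n+1}, where ω_{n+1} is the Lebesgue volume of the unit ball in ℝ^{n+1}. For 0 ≤ j ≤ n define g_j(ρ) = C(n,j)·ω·(cos ρ)^j·(sin ρ)^{n−j}, and define f_{−1}(ρ) = ω·∫_0^ρ (sin t)^n dt, f_0(ρ) = g_0(ρ), f_1(ρ) = g_1(ρ) + n·f_{−1}(ρ), and f_j(ρ) = g_j(ρ) + ((n−j+1)/(j−1))·f_{j−2}(ρ) for 2 ≤ j ≤ n. Set s_{k−1} = sup_{ρ ∈ (0,π/2)} f_{k−1}(ρ). Then there exists a differentiable function η_k : (0, s_{k−1}) → ℝ such that η_k(f_{k−1}(ρ)) = g_k(ρ)² for every ρ ∈ (0, π/2), and its derivative satisfies, for every ρ ∈ (0, π/2), η_k′(f_{k−1}(ρ)) = [ (2k(n−k)/(n−k+1))·g_k(ρ)² − 2(n−k+1)·g_{k−1}(ρ)² ] / ( k·g_{k−1}(ρ) ). -/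

import Mathlib

/-!
Write `f = Fq n ω k` (the paper's `f_{k-1}`) and `g_j = gsph n ω j`. Differentiating the binomial
terms gives `g_j' = -(n-j+1) g_{j-1} + (j+1) g_{j+1}`, and along the recursion defining the
quermassintegrals these derivatives telescope to `f' = k g_k`, which is positive on `(0, π/2)`.
So `f` maps `(0, π/2)` diffeomorphically onto `(0, f(π/2))`, and `η_k = g_k² ∘ f⁻¹` has
`η_k'(f) = 2 g_k g_k' / (k g_k)` by the inverse function theorem. The identity
`(n-k+1)(k+1) g_{k+1} g_{k-1} = k(n-k) g_k²` eliminates `g_{k+1}` from this expression.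
-/

open Real MeasureTheory

/-- `ballVol m` is the Lebesgue volume of the closed unit ball in `ℝ^m`. -/
noncomputable def ballVol (m : ℕ) : ℝ :=
  (volume (Metric.closedBall (0 : EuclideanSpace ℝ (Fin m)) 1)).toReal

/-- `g n ω j ρ = C(n,j)·ω·(cos ρ)^j·(sin ρ)^{n−j}`, the curvature integral
`∫_{∂B_ρ} σ_j` over the geodesic sphere of radius `ρ` in `S^{n+1}`. -/
noncomputable def gsph (n : ℕ) (ω : ℝ) (j : ℕ) (ρ : ℝ) : ℝ :=
  (n.choose j : ℝ) * ω * (Real.cos ρ) ^ j * (Real.sin ρ) ^ (n - j)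

/-- `Fq n ω k = f_{k−1}`, the quermassintegral `A_{k−1}(B_ρ)` of the geodesic ball:
`f_{−1}(ρ) = ω ∫_0^ρ sin^n`, `f_0 = g_0`, `f_1 = g_1 + n f_{−1}`,
`f_j = g_j + ((n−j+1)/(j−1)) f_{j−2}` for `2 ≤ j ≤ n`. -/
noncomputable def Fq (n : ℕ) (ω : ℝ) : ℕ → ℝ → ℝ
  | 0, ρ => ω * ∫ t in (0 : ℝ)..ρ, (Real.sin t) ^ n
  | 1, ρ => gsph n ω 0 ρ
  | 2, ρ => gsph n ω 1 ρ + n * Fq n ω 0 ρ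
  | (j + 3), ρ => gsph n ω (j + 2) ρ +
      (((n : ℝ) - ((j : ℝ) + 2) + 1) / (((j : ℝ) + 2) - 1)) * Fq n ω (j + 1) ρ

open Set Function Filter Topology

lemma hasDerivAt_comp_invFunOn {𝕜 : Type*} [NontriviallyNormedField 𝕜] [CompleteSpace 𝕜]
    {F G : 𝕜 → 𝕜} {s : Set 𝕜} {x F' G' : 𝕜} (hs : IsOpen s) (hinj : InjOn F s) (hx : x ∈ s)
    (hF : HasStrictDerivAt F F' x) (hF' : F' ≠ 0) (hG : HasDerivAt G G' x) :
    HasDerivAt (G ∘ invFunOn F s) (G' / F') (F x) := by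
  have hleft : ∀ᶠ y in 𝓝 x, invFunOn F s (F y) = y :=
    eventually_of_mem (hs.mem_nhds hx) fun y hy => hinj.leftInvOn_invFunOn hy
  rw [← hinj.leftInvOn_invFunOn hx] at hG
  simpa [div_eq_mul_inv] using hG.comp _ (hF.to_local_left_inverse hF' hleft).hasDerivAt

lemma ballVol_pos (m : ℕ) : 0 < ballVol m :=
  ENNReal.toReal_pos (Metric.measure_closedBall_pos volume _ one_pos).ne'
    (isCompact_closedBall _ _).measure_lt_top.ne

lemma gsph_pos {n j : ℕ} {ω ρ : ℝ} (hj : j ≤ n) (hω : 0 < ω) (hρ : ρ ∈ Ioo 0 (π / 2)) :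
    0 < gsph n ω j ρ := by
  have hcos : 0 < cos ρ := cos_pos_of_mem_Ioo ⟨by linarith [hρ.1, pi_pos], hρ.2⟩
  have hsin : 0 < sin ρ := sin_pos_of_pos_of_lt_pi hρ.1 (by linarith [hρ.2, pi_pos])
  have hchoose : (0 : ℝ) < n.choose j := by exact_mod_cast Nat.choose_pos hj
  unfold gsph
  positivity

lemma gsph_apply_zero {n j : ℕ} (hj : j < n) (ω : ℝ) : gsph n ω j 0 = 0 := by
  simp [gsph, zero_pow (Nat.sub_ne_zero_of_lt hj)]

lemma cast_choose_succ_mul {n i : ℕ} (hi : i ≤ n) :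
    (n.choose (i + 1) : ℝ) * (i + 1) = n.choose i * (n - i) := by
  rw [← Nat.cast_sub hi]
  exact_mod_cast Nat.choose_succ_right_eq n i

lemma gsph_zero_hasDerivAt (n : ℕ) (ω ρ : ℝ) :
    HasDerivAt (gsph n ω 0) (gsph n ω 1 ρ) ρ := by
  have hg : gsph n ω 0 = fun x => ω * sin x ^ n := by ext x; simp [gsph]
  rw [hg]
  refine ((hasDerivAt_sin ρ).pow n).const_mul ω |>.congr_deriv ?_
  simp only [gsph, Nat.choose_one_right, pow_one]
  ring

lemma gsph_hasDerivAt {n j : ℕ} (hj : 1 ≤ j) (hjn : j < n) (ω ρ : ℝ) :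
    HasDerivAt (gsph n ω j)
      (-((n : ℝ) - j + 1) * gsph n ω (j - 1) ρ + (j + 1) * gsph n ω (j + 1) ρ) ρ := by
  obtain ⟨i, rfl⟩ : ∃ i, j = i + 1 := ⟨j - 1, by omega⟩
  obtain ⟨m, rfl⟩ : ∃ m, n = i + m + 2 := ⟨n - i - 2, by omega⟩
  have e₁ := cast_choose_succ_mul (n := i + m + 2) (i := i) (by omega)
  have e₂ := cast_choose_succ_mul (n := i + m + 2) (i := i + 1) (by omega)
  push_cast at e₁ e₂
  have hg : gsph (i + m + 2) ω (i + 1) =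
      fun x => (i + m + 2).choose (i + 1) * ω * (cos x ^ (i + 1) * sin x ^ (m + 1)) := by
    ext x; simp only [gsph, show i + m + 2 - (i + 1) = m + 1 by omega]; ring
  rw [hg]
  refine (((hasDerivAt_cos ρ).pow (i + 1)).mul ((hasDerivAt_sin ρ).pow (m + 1))).const_mul _
    |>.congr_deriv ?_
  simp only [gsph, show i + m + 2 - (i + 1 + 1) = m by omega, show i + m + 2 - i = m + 2 by omega,
    Nat.add_sub_cancel, Pi.pow_apply]
  push_cast
  linear_combination
    -(ω * cos ρ ^ i * sin ρ ^ (m + 2)) * e₁ - (ω * cos ρ ^ (i + 2) * sin ρ ^ m) * e₂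

lemma gsph_succ_mul_gsph_pred {n k : ℕ} (hk : 1 ≤ k) (hkn : k < n) (ω ρ : ℝ) :
    ((n : ℝ) - k + 1) * (k + 1) * (gsph n ω (k + 1) ρ * gsph n ω (k - 1) ρ) =
      k * (n - k) * gsph n ω k ρ ^ 2 := by
  obtain ⟨i, rfl⟩ : ∃ i, k = i + 1 := ⟨k - 1, by omega⟩
  obtain ⟨m, rfl⟩ : ∃ m, n = i + m + 2 := ⟨n - i - 2, by omega⟩
  have e₁ := cast_choose_succ_mul (n := i + m + 2) (i := i) (by omega)
  have e₂ := cast_choose_succ_mul (n := i + m + 2) (i := i + 1) (by omega)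
  push_cast at e₁ e₂
  simp only [gsph, show i + m + 2 - (i + 1) = m + 1 by omega,
    show i + m + 2 - (i + 1 + 1) = m by omega, show i + m + 2 - i = m + 2 by omega,
    Nat.add_sub_cancel]
  push_cast
  linear_combination (ω ^ 2 * cos ρ ^ (2 * i + 2) * sin ρ ^ (2 * m + 2)) *
    ((m + 2) * (i + m + 2).choose i * e₂ - (m + 1) * (i + m + 2).choose (i + 1) * e₁)

lemma Fq_zero_hasDerivAt (n : ℕ) (ω ρ : ℝ) : HasDerivAt (Fq n ω 0) (gsph n ω 0 ρ) ρ := by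
  have hsin : Continuous fun t => sin t ^ n := by fun_prop
  have hI := intervalIntegral.integral_hasDerivAt_right (hsin.intervalIntegrable 0 ρ)
    (hsin.stronglyMeasurableAtFilter _ _) hsin.continuousAt
  simpa [Fq, gsph] using hI.const_mul ω

lemma Fq_hasDerivAt {n j : ℕ} (hj : 1 ≤ j) (hjn : j ≤ n) (ω ρ : ℝ) :
    HasDerivAt (Fq n ω j) (j * gsph n ω j ρ) ρ := by
  induction j, ρ using Fq.induct with
  | case1 => omega
  | case2 ρ =>
    simpa [Fq] using gsph_zero_hasDerivAt n ω ρ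
  | case3 ρ _ =>
    refine ((gsph_hasDerivAt le_rfl hjn ω ρ).add ((Fq_zero_hasDerivAt n ω ρ).const_mul (n : ℝ)))
      |>.congr_deriv ?_
    simp only [gsph, Nat.choose_zero_right, Nat.sub_self, Nat.sub_zero, pow_zero]
    push_cast
    ring
  | case4 i ρ ih =>
    have hg := gsph_hasDerivAt (n := n) (j := i + 2) (by omega) (by omega) ω ρ
    have hF := (ih (by omega) (by omega : i + 1 ≤ n)).const_mul
      (((n : ℝ) - (i + 2) + 1) / (i + 2 - 1))
    refine (hg.add hF).congr_deriv ?_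
    have : (i : ℝ) + 2 - 1 ≠ 0 := by linarith [(i.cast_nonneg : (0 : ℝ) ≤ i)]
    field_simp
    push_cast
    ring

lemma Fq_apply_zero {n j : ℕ} (hjn : j ≤ n) (ω : ℝ) : Fq n ω j 0 = 0 := by
  suffices ∀ ρ : ℝ, ρ = 0 → Fq n ω j ρ = 0 from this 0 rfl
  intro ρ hρ
  induction j, ρ using Fq.induct with
  | case1 => simp [Fq, hρ]
  | case2 => simp [Fq, hρ, gsph_apply_zero (by omega : 0 < n)]
  | case3 ρ _ =>
    subst hρ
    simp [Fq, gsph_apply_zero (by omega : 1 < n)]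
  | case4 i ρ ih =>
    subst hρ
    simp [Fq, ih (by omega) rfl, gsph_apply_zero (by omega : i + 2 < n)]

lemma Fq_hasStrictDerivAt {n k : ℕ} (hk : 1 ≤ k) (hkn : k ≤ n) (ω ρ : ℝ) :
    HasStrictDerivAt (Fq n ω k) (k * gsph n ω k ρ) ρ :=
  hasStrictDerivAt_of_hasDerivAt_of_continuousAt
    (Eventually.of_forall fun x => Fq_hasDerivAt hk hkn ω x)
    (by unfold gsph; fun_prop)

lemma Fq_strictMonoOn {n k : ℕ} {ω : ℝ} (hk : 1 ≤ k) (hkn : k ≤ n) (hω : 0 < ω) :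
    StrictMonoOn (Fq n ω k) (Icc 0 (π / 2)) := by
  refine strictMonoOn_of_deriv_pos (convex_Icc _ _)
    (fun x _ => (Fq_hasDerivAt hk hkn ω x).continuousAt.continuousWithinAt) fun x hx => ?_
  rw [interior_Icc] at hx
  rw [(Fq_hasDerivAt hk hkn ω x).deriv]
  exact mul_pos (by exact_mod_cast hk) (gsph_pos hkn hω hx)

lemma Fq_image_Ioo {n k : ℕ} {ω : ℝ} (hk : 1 ≤ k) (hkn : k ≤ n) (hω : 0 < ω) :
    Fq n ω k '' Ioo 0 (π / 2) = Ioo 0 (Fq n ω k (π / 2)) := by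
  rw [ContinuousOn.image_Ioo_of_strictMonoOn (by positivity)
    (fun x _ => (Fq_hasDerivAt hk hkn ω x).continuousAt.continuousWithinAt)
    (Fq_strictMonoOn hk hkn hω), Fq_apply_zero hkn]

lemma sSup_Fq_image_Ioo {n k : ℕ} {ω : ℝ} (hk : 1 ≤ k) (hkn : k ≤ n) (hω : 0 < ω) :
    sSup (Fq n ω k '' Ioo 0 (π / 2)) = Fq n ω k (π / 2) := by
  have hpos : 0 < Fq n ω k (π / 2) := by
    simpa [Fq_apply_zero hkn] using Fq_strictMonoOn hk hkn hω
      (left_mem_Icc.2 (by positivity)) (right_mem_Icc.2 (by positivity)) (by positivity)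
  rw [Fq_image_Ioo hk hkn hω, csSup_Ioo hpos]

lemma two_mul_gsph_mul_deriv_div_eq {n k : ℕ} {ω ρ : ℝ} (hk : 1 ≤ k) (hkn : k < n) (hω : 0 < ω)
    (hρ : ρ ∈ Ioo 0 (π / 2)) :
    2 * gsph n ω k ρ * (-((n : ℝ) - k + 1) * gsph n ω (k - 1) ρ + (k + 1) * gsph n ω (k + 1) ρ) /
        (k * gsph n ω k ρ) =
      (2 * k * (n - k) / (n - k + 1) * gsph n ω k ρ ^ 2 -
          2 * (n - k + 1) * gsph n ω (k - 1) ρ ^ 2) /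
        (k * gsph n ω (k - 1) ρ) := by
  have hk₀ : (0 : ℝ) < k := by exact_mod_cast hk
  have hnk : (0 : ℝ) < n - k + 1 := by
    have : (k : ℝ) < n := by exact_mod_cast hkn
    linarith
  have hg := gsph_pos hkn.le hω hρ
  have hg' := gsph_pos (n := n) (j := k - 1) (by omega) hω hρ
  field_simp
  linear_combination gsph_succ_mul_gsph_pred hk hkn ω ρ

theorem eta_k_exists_general (n k : ℕ) (hk1 : 1 ≤ k) (hk2 : k ≤ n - 1) :
    ∃ η : ℝ → ℝ,
      (∀ s ∈ Set.Ioo 0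
          (sSup (Fq n (((n : ℝ) + 1) * ballVol (n + 1)) k '' Set.Ioo 0 (π / 2))),
        DifferentiableAt ℝ η s) ∧
      ∀ ρ ∈ Set.Ioo 0 (π / 2),
        η (Fq n (((n : ℝ) + 1) * ballVol (n + 1)) k ρ) =
            (gsph n (((n : ℝ) + 1) * ballVol (n + 1)) k ρ) ^ 2 ∧
        deriv η (Fq n (((n : ℝ) + 1) * ballVol (n + 1)) k ρ) =
          ((2 * (k : ℝ) * ((n : ℝ) - k) / ((n : ℝ) - k + 1)) *
              (gsph n (((n : ℝ) + 1) * ballVol (n + 1)) k ρ) ^ 2 -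
            2 * ((n : ℝ) - k + 1) *
              (gsph n (((n : ℝ) + 1) * ballVol (n + 1)) (k - 1) ρ) ^ 2) /
          ((k : ℝ) * gsph n (((n : ℝ) + 1) * ballVol (n + 1)) (k - 1) ρ) := by
  set ω := ((n : ℝ) + 1) * ballVol (n + 1)
  have hω : 0 < ω := mul_pos (by positivity) (ballVol_pos _)
  have hkn : k < n := by omega
  have hk : (0 : ℝ) < k := by exact_mod_cast hk1
  have hinj : InjOn (Fq n ω k) (Ioo 0 (π / 2)) :=
    (Fq_strictMonoOn hk1 hkn.le hω).injOn.mono Ioo_subset_Icc_self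
  set η := (gsph n ω k ^ 2) ∘ invFunOn (Fq n ω k) (Ioo 0 (π / 2))
  have hη : ∀ ρ ∈ Ioo 0 (π / 2), HasDerivAt η (2 * gsph n ω k ρ *
      (-((n : ℝ) - k + 1) * gsph n ω (k - 1) ρ + (k + 1) * gsph n ω (k + 1) ρ) / (k * gsph n ω k ρ))
      (Fq n ω k ρ) := fun ρ hρ => by
    refine (hasDerivAt_comp_invFunOn isOpen_Ioo hinj hρ (Fq_hasStrictDerivAt hk1 hkn.le ω ρ)
      (mul_pos hk (gsph_pos hkn.le hω hρ)).ne' ((gsph_hasDerivAt hk1 hkn ω ρ).pow 2)).congr_deriv ?_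
    ring
  refine ⟨η, fun s hs => ?_, fun ρ hρ => ⟨by simp [η, hinj.leftInvOn_invFunOn hρ], ?_⟩⟩
  · rw [sSup_Fq_image_Ioo hk1 hkn.le hω, ← Fq_image_Ioo hk1 hkn.le hω] at hs
    obtain ⟨ρ, hρ, rfl⟩ := hs
    exact (hη ρ hρ).differentiableAt
  · rw [(hη ρ hρ).deriv, two_mul_gsph_mul_deriv_div_eq hk1 hkn hω hρ]

/-- Existence of the profile function `η_k` on `(0, s_{k−1})`,
`s_{k−1} = sup_{ρ ∈ (0,π/2)} f_{k−1}(ρ)`, with `η_k(f_{k−1}(ρ)) = g_k(ρ)²` and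
`η_k'(f_{k−1}(ρ)) = [(2k(n−k)/(n−k+1)) g_k(ρ)² − 2(n−k+1) g_{k−1}(ρ)²] / (k g_{k−1}(ρ))`. -/
theorem eta_k_exists (n k : ℕ) (hn : 2 ≤ n) (hk1 : 1 ≤ k) (hk2 : k ≤ n - 1) :
    ∃ η : ℝ → ℝ,
      (∀ s ∈ Set.Ioo 0
          (sSup (Fq n (((n : ℝ) + 1) * ballVol (n + 1)) k '' Set.Ioo 0 (π / 2))),
        DifferentiableAt ℝ η s) ∧
      ∀ ρ ∈ Set.Ioo 0 (π / 2),
        η (Fq n (((n : ℝ) + 1) * ballVol (n + 1)) k ρ) =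
            (gsph n (((n : ℝ) + 1) * ballVol (n + 1)) k ρ) ^ 2 ∧
        deriv η (Fq n (((n : ℝ) + 1) * ballVol (n + 1)) k ρ) =
          ((2 * (k : ℝ) * ((n : ℝ) - k) / ((n : ℝ) - k + 1)) *
              (gsph n (((n : ℝ) + 1) * ballVol (n + 1)) k ρ) ^ 2 -
            2 * ((n : ℝ) - k + 1) *
              (gsph n (((n : ℝ) + 1) * ballVol (n + 1)) (k - 1) ρ) ^ 2) /
          ((k : ℝ) * gsph n (((n : ℝ) + 1) * ballVol (n + 1)) (k - 1) ρ) :=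
  eta_k_exists_general n k hk1 hk2
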